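/- Let d ≥ 2 and let Q ∈ Sym₀(d) with ψ(Q) < ∞. If ρ₁ and ρ₂ are both minimizers of the entropy over A_Q, i.e. ρ₁, ρ₂ ∈ A_Q with ρᵢ log ρᵢ σ-integrable and ∫_{S^{d−1}} ρᵢ log ρᵢ dσ = ψ(Q) for i = 1, 2, then ρ₁ = ρ₂ σ-almost everywhere on S^{d−1}. -/

import Mathlib

/-!
The admissible class `A_Q` is convex (its constraints are linear in `ρ`) and `x ↦ x log x` is
strictly convex. Hence the midpoint of two minimisers is again admissible, with entropy at most
the common minimal value; so the pointwise convexity inequality between the midpoint and the two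
minimisers integrates to an equality, which by strict convexity forces `ρ₁ = ρ₂` almost
everywhere.
-/

open MeasureTheory Matrix

noncomputable section

/-- The unit sphere `S^{d-1} ⊂ ℝ^d`. -/
abbrev Sph (d : ℕ) := Metric.sphere (0 : EuclideanSpace ℝ (Fin d)) 1

/-- The surface (spherical) measure `σ` on the unit sphere `S^{d-1}`. -/
noncomputable def sphMeasure (d : ℕ) : Measure (Sph d) :=
  (volume : Measure (EuclideanSpace ℝ (Fin d))).toSphere

/-- The Q-tensor of a density `f` on the sphere:
`Q_f = ∫_{S^{d-1}} (ω ⊗ ω - (1/d) I) f(ω) dσ(ω)`, defined entrywise. -/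
noncomputable def Qtensor (d : ℕ) (f : Sph d → ℝ) : Matrix (Fin d) (Fin d) ℝ :=
  Matrix.of fun i j =>
    ∫ ω : Sph d,
      ((ω : EuclideanSpace ℝ (Fin d)) i * (ω : EuclideanSpace ℝ (Fin d)) j
        - if i = j then (1 : ℝ) / d else 0) * f ω ∂(sphMeasure d)

/-- The class `A_Q` of probability densities on the sphere whose Q-tensor is `Q`. -/
def densityClass (d : ℕ) (Q : Matrix (Fin d) (Fin d) ℝ) (ρ : Sph d → ℝ) : Prop :=
  Integrable ρ (sphMeasure d) ∧ (∀ ω, 0 ≤ ρ ω) ∧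
    (∫ ω, ρ ω ∂(sphMeasure d)) = 1 ∧ Qtensor d ρ = Q

/-- The entropy `∫_{S^{d-1}} ρ log ρ dσ` of a density `ρ`. -/
noncomputable def entropy (d : ℕ) (ρ : Sph d → ℝ) : ℝ :=
  ∫ ω, ρ ω * Real.log (ρ ω) ∂(sphMeasure d)

/-- The Ball–Majumdar singular potential
`ψ(Q) := inf { ∫ ρ log ρ dσ : ρ ∈ A_Q, ρ log ρ σ-integrable }`, valued in `ℝ ∪ {+∞}`
(realised as `EReal`, with `sInf ∅ = +∞`). -/
noncomputable def BMpsi (d : ℕ) (Q : Matrix (Fin d) (Fin d) ℝ) : EReal :=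
  sInf { x : EReal | ∃ ρ : Sph d → ℝ, densityClass d Q ρ ∧
    Integrable (fun ω => ρ ω * Real.log (ρ ω)) (sphMeasure d) ∧ x = (entropy d ρ : EReal) }

open Real

instance isFiniteMeasure_sphMeasure (d : ℕ) : IsFiniteMeasure (sphMeasure d) := by
  unfold sphMeasure; infer_instance

lemma MeasureTheory.Integrable.continuous_mul_of_compactSpace {X 𝕜 : Type*} [TopologicalSpace X]
    [CompactSpace X] [MeasurableSpace X] [OpensMeasurableSpace X] [RCLike 𝕜] {μ : Measure X}
    {φ f : X → 𝕜} (hφ : Continuous φ) (hf : Integrable f μ) :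
    Integrable (fun x => φ x * f x) μ :=
  hf.mul_of_top_right (hφ.memLp_top_of_hasCompactSupport (.of_compactSpace φ) μ)

section MulLog

variable {α : Type*} [MeasurableSpace α] {μ : Measure α} {f g : α → ℝ} {a b : ℝ}

lemma mul_log_convexComb_le {x y : ℝ} (hx : 0 ≤ x) (hy : 0 ≤ y) (ha : 0 ≤ a) (hb : 0 ≤ b)
    (hab : a + b = 1) :
    (a * x + b * y) * log (a * x + b * y) ≤ a * (x * log x) + b * (y * log y) :=
  convexOn_mul_log.2 (Set.mem_Ici.2 hx) (Set.mem_Ici.2 hy) ha hb hab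

lemma mul_log_convexComb_lt {x y : ℝ} (hx : 0 ≤ x) (hy : 0 ≤ y) (hxy : x ≠ y) (ha : 0 < a)
    (hb : 0 < b) (hab : a + b = 1) :
    (a * x + b * y) * log (a * x + b * y) < a * (x * log x) + b * (y * log y) :=
  strictConvexOn_mul_log.2 (Set.mem_Ici.2 hx) (Set.mem_Ici.2 hy) hxy ha hb hab

/-- `x log x ≥ -1` bounds the combination from below, convexity from above. -/
lemma integrable_mul_log_convexComb [IsFiniteMeasure μ] (hf₀ : 0 ≤ f) (hg₀ : 0 ≤ g)
    (hf : AEStronglyMeasurable f μ) (hg : AEStronglyMeasurable g μ)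
    (hfl : Integrable (fun x => f x * log (f x)) μ)
    (hgl : Integrable (fun x => g x * log (g x)) μ) (ha : 0 ≤ a) (hb : 0 ≤ b) (hab : a + b = 1) :
    Integrable (fun x => (a * f x + b * g x) * log (a * f x + b * g x)) μ := by
  refine integrable_of_le_of_le (g₁ := fun _ => -1)
    (g₂ := fun x => a * (f x * log (f x)) + b * (g x * log (g x)))
    (continuous_mul_log.comp_aestronglyMeasurable ((hf.const_mul a).add (hg.const_mul b)))
    (.of_forall fun x => ?_) (.of_forall fun x => mul_log_convexComb_le (hf₀ x) (hg₀ x) ha hb hab)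
    (integrable_const _) ((hfl.const_mul a).add (hgl.const_mul b))
  have hc : 0 ≤ a * f x + b * g x := by
    have : 0 ≤ f x := hf₀ x; have : 0 ≤ g x := hg₀ x; positivity
  linarith [self_sub_one_le_mul_log hc]

lemma ae_eq_of_integral_mul_log_convexComb_ge (hf₀ : 0 ≤ f) (hg₀ : 0 ≤ g)
    (hfl : Integrable (fun x => f x * log (f x)) μ)
    (hgl : Integrable (fun x => g x * log (g x)) μ)
    (hcl : Integrable (fun x => (a * f x + b * g x) * log (a * f x + b * g x)) μ)
    (ha : 0 < a) (hb : 0 < b) (hab : a + b = 1)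
    (hge : a * ∫ x, f x * log (f x) ∂μ + b * ∫ x, g x * log (g x) ∂μ ≤
      ∫ x, (a * f x + b * g x) * log (a * f x + b * g x) ∂μ) :
    f =ᵐ[μ] g := by
  have hconv : ∀ x, (a * f x + b * g x) * log (a * f x + b * g x) ≤
      a * (f x * log (f x)) + b * (g x * log (g x)) := fun x =>
    mul_log_convexComb_le (hf₀ x) (hg₀ x) ha.le hb.le hab
  have hrl : Integrable (fun x => a * (f x * log (f x)) + b * (g x * log (g x))) μ :=
    (hfl.const_mul a).add (hgl.const_mul b)
  have hint_eq : ∫ x, (a * f x + b * g x) * log (a * f x + b * g x) ∂μ =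
      ∫ x, a * (f x * log (f x)) + b * (g x * log (g x)) ∂μ := by
    refine le_antisymm (integral_mono hcl hrl hconv) ?_
    rwa [integral_add (hfl.const_mul a) (hgl.const_mul b), integral_const_mul, integral_const_mul]
  filter_upwards [(integral_eq_iff_of_ae_le hcl hrl (.of_forall hconv)).1 hint_eq] with x hx
  by_contra hne
  exact (mul_log_convexComb_lt (hf₀ x) (hg₀ x) hne ha hb hab).ne hx

end MulLog

def qKernel (d : ℕ) (i j : Fin d) (ω : Sph d) : ℝ :=
  (ω : EuclideanSpace ℝ (Fin d)) i * (ω : EuclideanSpace ℝ (Fin d)) j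
    - if i = j then (1 : ℝ) / d else 0

lemma continuous_qKernel (d : ℕ) (i j : Fin d) : Continuous (qKernel d i j) := by
  unfold qKernel; fun_prop

lemma Qtensor_apply (d : ℕ) (f : Sph d → ℝ) (i j : Fin d) :
    Qtensor d f i j = ∫ ω, qKernel d i j ω * f ω ∂(sphMeasure d) := rfl

lemma Qtensor_linearComb (d : ℕ) {f g : Sph d → ℝ} (hf : Integrable f (sphMeasure d))
    (hg : Integrable g (sphMeasure d)) (a b : ℝ) :
    Qtensor d (a • f + b • g) = a • Qtensor d f + b • Qtensor d g := by
  ext i j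
  have hkf := hf.continuous_mul_of_compactSpace (continuous_qKernel d i j)
  have hkg := hg.continuous_mul_of_compactSpace (continuous_qKernel d i j)
  simp only [Qtensor_apply, Matrix.add_apply, Matrix.smul_apply, Pi.add_apply, Pi.smul_apply,
    smul_eq_mul, ← integral_const_mul, ← integral_add (hkf.const_mul a) (hkg.const_mul b)]
  congr 1 with ω
  ring

lemma convex_densityClass (d : ℕ) (Q : Matrix (Fin d) (Fin d) ℝ) :
    Convex ℝ {ρ | densityClass d Q ρ} := by
  rintro f ⟨hf, hf₀, hf₁, hfQ⟩ g ⟨hg, hg₀, hg₁, hgQ⟩ a b ha hb hab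
  refine ⟨(hf.const_mul a).add (hg.const_mul b), fun ω => ?_, ?_, ?_⟩
  · have := hf₀ ω; have := hg₀ ω
    simp only [Pi.add_apply, Pi.smul_apply, smul_eq_mul]; positivity
  · simp only [Pi.add_apply, Pi.smul_apply, smul_eq_mul]
    rw [integral_add (hf.const_mul a) (hg.const_mul b), integral_const_mul, integral_const_mul,
      hf₁, hg₁, mul_one, mul_one, hab]
  · rw [Qtensor_linearComb d hf hg, hfQ, hgQ, ← add_smul, hab, one_smul]

theorem entropy_minimizer_unique_general (d : ℕ)
    (Q : Matrix (Fin d) (Fin d) ℝ)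
    (ρ₁ ρ₂ : Sph d → ℝ)
    (h₁ : densityClass d Q ρ₁)
    (h₁ent : Integrable (fun ω => ρ₁ ω * Real.log (ρ₁ ω)) (sphMeasure d))
    (h₁min : (entropy d ρ₁ : EReal) = BMpsi d Q)
    (h₂ : densityClass d Q ρ₂)
    (h₂ent : Integrable (fun ω => ρ₂ ω * Real.log (ρ₂ ω)) (sphMeasure d))
    (h₂min : (entropy d ρ₂ : EReal) = BMpsi d Q) :
    ρ₁ =ᵐ[sphMeasure d] ρ₂ := by
  have hhalf : (1 / 2 : ℝ) + 1 / 2 = 1 := by norm_num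
  have hmid : densityClass d Q ((1 / 2 : ℝ) • ρ₁ + (1 / 2 : ℝ) • ρ₂) :=
    convex_densityClass d Q h₁ h₂ (by norm_num) (by norm_num) hhalf
  have hmid_ent := integrable_mul_log_convexComb h₁.2.1 h₂.2.1 h₁.1.1 h₂.1.1 h₁ent h₂ent
    (by norm_num) (by norm_num) hhalf
  have hmin_le : entropy d ρ₁ ≤ entropy d ((1 / 2 : ℝ) • ρ₁ + (1 / 2 : ℝ) • ρ₂) :=
    EReal.coe_le_coe_iff.1 (h₁min ▸ sInf_le ⟨_, hmid, hmid_ent, rfl⟩)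
  have h₁₂ : entropy d ρ₁ = entropy d ρ₂ := EReal.coe_injective (h₁min.trans h₂min.symm)
  refine ae_eq_of_integral_mul_log_convexComb_ge h₁.2.1 h₂.2.1 h₁ent h₂ent hmid_ent
    (by norm_num) (by norm_num) hhalf ?_
  calc (1 / 2 : ℝ) * entropy d ρ₁ + 1 / 2 * entropy d ρ₂ = entropy d ρ₁ := by rw [← h₁₂]; ring
    _ ≤ _ := hmin_le

/-- Uniqueness of the entropy minimiser: if `Q ∈ Sym₀(d)` has `ψ(Q) < ∞`
and `ρ₁, ρ₂ ∈ A_Q` both attain the infimum defining `ψ(Q)`, then `ρ₁ = ρ₂`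
σ-almost everywhere on `S^{d-1}`. -/
theorem entropy_minimizer_unique (d : ℕ) (hd : 2 ≤ d)
    (Q : Matrix (Fin d) (Fin d) ℝ) (hQsym : Qᵀ = Q) (hQtr : Q.trace = 0)
    (hfin : BMpsi d Q < ⊤)
    (ρ₁ ρ₂ : Sph d → ℝ)
    (h₁ : densityClass d Q ρ₁)
    (h₁ent : Integrable (fun ω => ρ₁ ω * Real.log (ρ₁ ω)) (sphMeasure d))
    (h₁min : (entropy d ρ₁ : EReal) = BMpsi d Q)
    (h₂ : densityClass d Q ρ₂)
    (h₂ent : Integrable (fun ω => ρ₂ ω * Real.log (ρ₂ ω)) (sphMeasure d))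
    (h₂min : (entropy d ρ₂ : EReal) = BMpsi d Q) :
    ρ₁ =ᵐ[sphMeasure d] ρ₂ :=
  entropy_minimizer_unique_general d Q ρ₁ ρ₂ h₁ h₁ent h₁min h₂ h₂ent h₂min
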